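/- For any distributions μ, ν over the states of an input-enabled probabilistic automaton, μ ∼ ν (distribution-based bisimilar) if and only if D_b(μ,ν) = 0. -/

import Mathlib

open Finset

structure ProbDist (S : Type) [Fintype S] where
  f : S → ℝ
  nonneg : ∀ s, 0 ≤ f s
  sum_one : ∑ s, f s = 1

/-- Probability assigned by a distribution to a set of states. -/
noncomputable def ProbDist.pr {S : Type} [Fintype S] (μ : ProbDist S) (C : Set S) : ℝ :=
  ∑ s, C.indicator μ.f s

/-- μ(A) := Σ_{s : L s = A} μ(s). -/
noncomputable def pOf {S AP : Type} [Fintype S] (L : S → Finset AP) (μ : ProbDist S)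
    (A : Finset AP) : ℝ :=
  μ.pr {s | L s = A}

/-- d_AP(μ,ν) := (1/2) Σ_{A ⊆ AP} |μ(A) − ν(A)|. -/
noncomputable def dAP {S AP : Type} [Fintype S] [Fintype AP] [DecidableEq AP]
    (L : S → Finset AP) (μ ν : ProbDist S) : ℝ :=
  (1 / 2) * ∑ A : Finset AP, |pOf L μ A - pOf L ν A|

/-- A (Segala) probabilistic automaton, image-finite. -/
structure PA (S Act AP : Type) [Fintype S] where
  trans : S → Act → ProbDist S → Prop
  L : S → Finset AP
  imageFinite : ∀ s a, {μ | trans s a μ}.Finite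

def PA.InputEnabled {S Act AP : Type} [Fintype S] (M : PA S Act AP) : Prop :=
  ∀ s a, ∃ μ, M.trans s a μ

noncomputable def PA.probOf {S Act AP : Type} [Fintype S] (M : PA S Act AP)
    (μ : ProbDist S) (A : Finset AP) : ℝ := pOf M.L μ A

/-- Combined transition s --a-->_P μ : μ is a convex combination of one-step successors. -/
def Combined {S Act AP : Type} [Fintype S] (M : PA S Act AP) (s : S) (a : Act)
    (μ : ProbDist S) : Prop :=
  ∃ (n : ℕ) (p : Fin n → ℝ) (ν : Fin n → ProbDist S),
    (∀ i, 0 ≤ p i) ∧ (∑ i, p i = 1) ∧ (∀ i, M.trans s a (ν i)) ∧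
    (∀ t, μ.f t = ∑ i, p i * (ν i).f t)

/-- Lifted transition μ --a--> μ' between distributions. -/
def Lifted {S Act AP : Type} [Fintype S] (M : PA S Act AP) (μ : ProbDist S) (a : Act)
    (μ' : ProbDist S) : Prop :=
  ∃ k : S → ProbDist S, (∀ s, 0 < μ.f s → Combined M s a (k s)) ∧
    (∀ t, μ'.f t = ∑ s, μ.f s * (k s).f t)

/-- ProbDist S carries the topology inherited from ℝ^{|S|}. -/
noncomputable instance {S : Type} [Fintype S] : TopologicalSpace (ProbDist S) :=
  TopologicalSpace.induced (fun μ : ProbDist S => μ.f) inferInstance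

/-- Distribution-based bisimulation. -/
def IsBisim {S Act AP : Type} [Fintype S] (M : PA S Act AP)
    (R : ProbDist S → ProbDist S → Prop) : Prop :=
  Symmetric R ∧ ∀ μ ν, R μ ν →
    (∀ A : Finset AP, M.probOf μ A = M.probOf ν A) ∧
    (∀ a μ', Lifted M μ a μ' → ∃ ν', Lifted M ν a ν' ∧ R μ' ν')

/-- Distribution-based bisimilarity. -/
def Bisimilar {S Act AP : Type} [Fintype S] (M : PA S Act AP) (μ ν : ProbDist S) : Prop :=
  ∃ R, IsBisim M R ∧ R μ ν

/-- A (discounted) approximate bisimulation: a family of symmetric relations. -/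
def IsApproxBisim {S Act AP : Type} [Fintype S] [Fintype AP] [DecidableEq AP]
    (M : PA S Act AP) (γ : ℝ) (R : ℝ → ProbDist S → ProbDist S → Prop) : Prop :=
  (∀ ε, Symmetric (R ε)) ∧ ∀ ε μ ν, R ε μ ν →
    dAP M.L μ ν ≤ ε ∧
    ∀ a μ', Lifted M μ a μ' → ∃ ν', Lifted M ν a ν' ∧ R (ε / γ) μ' ν'

/-- μ ∼_ε ν. -/
def ApproxBisimilar {S Act AP : Type} [Fintype S] [Fintype AP] [DecidableEq AP]
    (M : PA S Act AP) (γ : ℝ) (ε : ℝ) (μ ν : ProbDist S) : Prop :=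
  ∃ R, IsApproxBisim M γ R ∧ R ε μ ν

/-- The bisimulation distance D_b(μ,ν) = inf {ε ≥ 0 : μ ∼_ε ν}. -/
noncomputable def Db {S Act AP : Type} [Fintype S] [Fintype AP] [DecidableEq AP]
    (M : PA S Act AP) (γ : ℝ) (μ ν : ProbDist S) : ℝ :=
  sInf {ε | 0 ≤ ε ∧ ApproxBisimilar M γ ε μ ν}

/-!
If `D_b(μ, ν) = 0` then `μ ∼_ε ν` for every `ε > 0`, and we show that this family of relations
is itself a bisimulation. Under input-enabledness, any two distributions `μ, ν` satisfy
`μ ∼_ε ν` as soon as their total variation distance is at most `ε` (mimic every transition of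
`μ` by the same kernel applied to `ν`). Hence `ρ ↦ μ ∼_ε ρ` is stable under small perturbations,
and since the lifted successors of a distribution form a compact set (a continuous image of a
product of convex hulls of finitely many points), the near-matches `ν'_n` of a transition
`μ --a--> μ'` with `μ' ∼_{1/n} ν'_n` accumulate at a successor `ν'` with `μ' ∼_δ ν'` for all
`δ > 0`. The converse is immediate: a bisimulation is a `0`-approximate bisimulation.
-/

variable {S Act AP : Type} [Fintype S]

namespace ProbDist

theorem f_injective : Function.Injective (ProbDist.f : ProbDist S → S → ℝ) := by
  rintro ⟨f, _, _⟩ ⟨g, _, _⟩ (rfl : f = g)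
  rfl

theorem isEmbedding_f : Topology.IsEmbedding (ProbDist.f : ProbDist S → S → ℝ) :=
  ⟨⟨rfl⟩, f_injective⟩

noncomputable def bind {ι : Type} [Fintype ι] (μ : ProbDist ι) (k : ι → ProbDist S) :
    ProbDist S where
  f t := ∑ i, μ.f i * (k i).f t
  nonneg t := sum_nonneg fun i _ => mul_nonneg (μ.nonneg i) ((k i).nonneg t)
  sum_one := by
    rw [sum_comm]
    simp [← mul_sum, ProbDist.sum_one]

theorem continuous_bind {ι : Type} [Fintype ι] (μ : ProbDist ι) :
    Continuous fun k : ι → ProbDist S => μ.bind k :=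
  continuous_induced_rng.2 <| continuous_pi fun t => continuous_finsetSum _ fun i _ =>
    continuous_const.mul <|
      (continuous_apply t).comp <| isEmbedding_f.continuous.comp (continuous_apply i)

noncomputable def tvDist (μ ν : ProbDist S) : ℝ :=
  (1 / 2) * ∑ s, |μ.f s - ν.f s|

theorem tvDist_nonneg (μ ν : ProbDist S) : 0 ≤ μ.tvDist ν := by
  unfold tvDist
  positivity

theorem tvDist_comm (μ ν : ProbDist S) : μ.tvDist ν = ν.tvDist μ := by
  simp only [tvDist, abs_sub_comm]

theorem tvDist_self (μ : ProbDist S) : μ.tvDist μ = 0 := by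
  simp [tvDist]

theorem continuous_tvDist_left (ν : ProbDist S) : Continuous fun μ : ProbDist S => μ.tvDist ν :=
  continuous_const.mul <| continuous_finsetSum _ fun s _ =>
    (((continuous_apply s).comp isEmbedding_f.continuous).sub continuous_const).abs

theorem tvDist_bind_le {ι : Type} [Fintype ι] (μ ν : ProbDist ι) (k : ι → ProbDist S) :
    (μ.bind k).tvDist (ν.bind k) ≤ μ.tvDist ν := by
  unfold tvDist
  gcongr
  calc ∑ t, |(μ.bind k).f t - (ν.bind k).f t|
      = ∑ t, |∑ i, (μ.f i - ν.f i) * (k i).f t| := by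
        simp only [bind, sub_mul, sum_sub_distrib]
    _ ≤ ∑ t, ∑ i, |μ.f i - ν.f i| * (k i).f t := by
        gcongr with t
        refine (abs_sum_le_sum_abs _ _).trans_eq (sum_congr rfl fun i _ => ?_)
        rw [abs_mul, abs_of_nonneg ((k i).nonneg t)]
    _ = ∑ i, |μ.f i - ν.f i| := by
        rw [sum_comm]
        simp [← mul_sum, ProbDist.sum_one]

end ProbDist

open ProbDist

theorem pOf_eq_sum_filter [DecidableEq AP] (L : S → Finset AP) (μ : ProbDist S) (A : Finset AP) :
    pOf L μ A = ∑ s with L s = A, μ.f s := by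
  simp [pOf, ProbDist.pr, Set.indicator_apply, sum_filter]

section Labels

variable [Fintype AP] [DecidableEq AP]

theorem dAP_le_tvDist (L : S → Finset AP) (μ ν : ProbDist S) : dAP L μ ν ≤ μ.tvDist ν := by
  unfold dAP tvDist
  gcongr
  rw [← sum_fiberwise univ L fun s => |μ.f s - ν.f s|]
  gcongr with A
  rw [pOf_eq_sum_filter, pOf_eq_sum_filter, ← sum_sub_distrib]
  exact abs_sum_le_sum_abs _ _

theorem dAP_le_add (L : S → Finset AP) (μ ρ ν : ProbDist S) :
    dAP L μ ν ≤ dAP L μ ρ + dAP L ρ ν := by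
  unfold dAP
  rw [← mul_add, ← sum_add_distrib]
  gcongr
  exact abs_sub_le _ _ _

theorem dAP_nonpos_iff (L : S → Finset AP) (μ ν : ProbDist S) :
    dAP L μ ν ≤ 0 ↔ ∀ A, pOf L μ A = pOf L ν A := by
  have hsum : 0 ≤ ∑ A : Finset AP, |pOf L μ A - pOf L ν A| := sum_nonneg fun _ _ => abs_nonneg _
  have hdAP : dAP L μ ν ≤ 0 ↔ ∑ A : Finset AP, |pOf L μ A - pOf L ν A| ≤ 0 := by
    unfold dAP
    constructor <;> intro h <;> linarith
  rw [hdAP, hsum.ge_iff_eq', sum_eq_zero_iff_of_nonneg fun _ _ => abs_nonneg _]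
  simp [sub_eq_zero]

end Labels

section Transitions

variable {M : PA S Act AP} {s : S} {a : Act}

theorem Combined.of_trans {ρ : ProbDist S} (h : M.trans s a ρ) : Combined M s a ρ :=
  ⟨1, fun _ => 1, fun _ => ρ, fun _ => zero_le_one, by simp, fun _ => h, fun t => by simp⟩

theorem Combined.bind {ι : Type} [Fintype ι] (w : ProbDist ι) {ν : ι → ProbDist S}
    (hν : ∀ i, M.trans s a (ν i)) : Combined M s a (w.bind ν) := by
  let e := Fintype.equivFin ι
  refine ⟨Fintype.card ι, w.f ∘ e.symm, ν ∘ e.symm, fun _ => w.nonneg _, ?_,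
    fun _ => hν _, fun t => ?_⟩
  · rw [← w.sum_one]
    exact e.symm.sum_comp w.f
  · exact (e.symm.sum_comp fun i => w.f i * (ν i).f t).symm

theorem image_f_setOf_combined (M : PA S Act AP) (s : S) (a : Act) :
    ProbDist.f '' {ρ | Combined M s a ρ} = convexHull ℝ (ProbDist.f '' {ρ | M.trans s a ρ}) := by
  ext x
  constructor
  · rintro ⟨ρ, ⟨n, p, ν, hp0, hp1, hν, hρ⟩, rfl⟩
    have hρ' : ρ.f = ∑ i, p i • (ν i).f := funext fun t => by simp [hρ]
    rw [hρ']
    exact (convex_convexHull ℝ _).sum_mem (fun i _ => hp0 i) hp1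
      fun i _ => subset_convexHull ℝ _ ⟨ν i, hν i, rfl⟩
  · rw [mem_convexHull_iff_exists_fintype]
    rintro ⟨ι, _, w, z, hw0, hw1, hz, rfl⟩
    choose ν hν hνz using hz
    refine ⟨ProbDist.bind ⟨w, hw0, hw1⟩ ν, Combined.bind _ hν, funext fun t => ?_⟩
    simp [ProbDist.bind, ← hνz]

theorem isCompact_setOf_combined (M : PA S Act AP) (s : S) (a : Act) :
    IsCompact {ρ | Combined M s a ρ} := by
  rw [isEmbedding_f.isCompact_iff, image_f_setOf_combined]
  exact ((M.imageFinite s a).image _).isCompact_convexHull ℝ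

theorem lifted_iff_exists_bind (hM : M.InputEnabled) {μ μ' : ProbDist S} :
    Lifted M μ a μ' ↔ ∃ k : S → ProbDist S, (∀ s, Combined M s a (k s)) ∧ μ' = μ.bind k := by
  classical
  constructor
  · rintro ⟨k, hk, hμ'⟩
    -- states outside the support may use any transition; input-enabledness provides one
    let k' s := if 0 < μ.f s then k s else (hM s a).choose
    refine ⟨k', fun s => ?_, f_injective <| funext fun t => (hμ' t).trans ?_⟩
    · by_cases hs : 0 < μ.f s
      · simpa [k', hs] using hk s hs
      · simpa [k', hs] using Combined.of_trans (hM s a).choose_spec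
    · refine sum_congr rfl fun s _ => ?_
      rcases (μ.nonneg s).lt_or_eq with hs | hs
      · simp [k', hs]
      · simp [← hs]
  · rintro ⟨k, hk, rfl⟩
    exact ⟨k, fun s _ => hk s, fun _ => rfl⟩

theorem isCompact_setOf_lifted (hM : M.InputEnabled) (ν : ProbDist S) (a : Act) :
    IsCompact {ν' | Lifted M ν a ν'} := by
  have hrange : {ν' | Lifted M ν a ν'} =
      Set.range fun k : (s : S) → {ρ // Combined M s a ρ} => ν.bind fun s => k s := by
    ext ν'
    simp only [Set.mem_ofPred_eq, lifted_iff_exists_bind hM, Set.mem_range]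
    constructor
    · rintro ⟨k, hk, rfl⟩
      exact ⟨fun s => ⟨k s, hk s⟩, rfl⟩
    · rintro ⟨k, rfl⟩
      exact ⟨fun s => k s, fun s => (k s).2, rfl⟩
  have : ∀ s, CompactSpace {ρ // Combined M s a ρ} := fun s =>
    isCompact_iff_compactSpace.1 (isCompact_setOf_combined M s a)
  rw [hrange]
  exact isCompact_range <| (continuous_bind ν).comp <|
    continuous_pi fun s => continuous_subtype_val.comp (continuous_apply s)

end Transitions

section Approximate

variable [Fintype AP] [DecidableEq AP] {M : PA S Act AP} {γ : ℝ}

namespace ApproxBisimilar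

variable {ε : ℝ} {μ ν : ProbDist S}

theorem symm (h : ApproxBisimilar M γ ε μ ν) : ApproxBisimilar M γ ε ν μ :=
  let ⟨R, hR, hμν⟩ := h
  ⟨R, hR, hR.1 ε hμν⟩

theorem dAP_le (h : ApproxBisimilar M γ ε μ ν) : dAP M.L μ ν ≤ ε :=
  let ⟨_, hR, hμν⟩ := h
  (hR.2 ε μ ν hμν).1

theorem exists_lifted (h : ApproxBisimilar M γ ε μ ν) {a : Act} {μ' : ProbDist S}
    (hμ' : Lifted M μ a μ') : ∃ ν', Lifted M ν a ν' ∧ ApproxBisimilar M γ (ε / γ) μ' ν' :=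
  let ⟨R, hR, hμν⟩ := h
  let ⟨ν', hν', hR'⟩ := (hR.2 ε μ ν hμν).2 a μ' hμ'
  ⟨ν', hν', R, hR, hR'⟩

theorem mono (hγ : 0 ≤ γ) (h : ApproxBisimilar M γ ε μ ν) {ε' : ℝ} (hε : ε ≤ ε') :
    ApproxBisimilar M γ ε' μ ν := by
  refine ⟨fun δ x y => ∃ e ≤ δ, ApproxBisimilar M γ e x y, ⟨?_, ?_⟩, ε, hε, h⟩
  · rintro δ x y ⟨e, he, hxy⟩
    exact ⟨e, he, hxy.symm⟩
  · rintro δ x y ⟨e, he, hxy⟩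
    refine ⟨hxy.dAP_le.trans he, fun a x' hx' => ?_⟩
    obtain ⟨y', hy', hxy'⟩ := hxy.exists_lifted hx'
    exact ⟨y', hy', e / γ, by gcongr, hxy'⟩

theorem trans {η : ℝ} {ρ : ProbDist S} (h₁ : ApproxBisimilar M γ ε μ ρ)
    (h₂ : ApproxBisimilar M γ η ρ ν) : ApproxBisimilar M γ (ε + η) μ ν := by
  refine ⟨fun δ x z => ∃ d e y, d + e = δ ∧ ApproxBisimilar M γ d x y ∧
    ApproxBisimilar M γ e y z, ⟨?_, ?_⟩, ε, η, ρ, rfl, h₁, h₂⟩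
  · rintro δ x z ⟨d, e, y, rfl, hxy, hyz⟩
    exact ⟨e, d, y, add_comm e d, hyz.symm, hxy.symm⟩
  · rintro δ x z ⟨d, e, y, rfl, hxy, hyz⟩
    refine ⟨(dAP_le_add M.L x y z).trans (add_le_add hxy.dAP_le hyz.dAP_le), fun a x' hx' => ?_⟩
    obtain ⟨y', hy', hxy'⟩ := hxy.exists_lifted hx'
    obtain ⟨z', hz', hyz'⟩ := hyz.exists_lifted hy'
    exact ⟨z', hz', d / γ, e / γ, y', (add_div d e γ).symm, hxy', hyz'⟩

end ApproxBisimilar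

theorem approxBisimilar_of_tvDist_le (hM : M.InputEnabled) (hγ0 : 0 < γ) (hγ1 : γ ≤ 1)
    {ε : ℝ} {μ ν : ProbDist S} (h : μ.tvDist ν ≤ ε) : ApproxBisimilar M γ ε μ ν := by
  refine ⟨fun ε μ ν => μ.tvDist ν ≤ ε, ⟨fun ε μ ν h => (tvDist_comm ν μ).trans_le h, ?_⟩, h⟩
  intro ε μ ν h
  refine ⟨(dAP_le_tvDist M.L μ ν).trans h, fun a μ' hμ' => ?_⟩
  obtain ⟨k, hk, rfl⟩ := (lifted_iff_exists_bind hM).1 hμ'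
  refine ⟨ν.bind k, (lifted_iff_exists_bind hM).2 ⟨k, hk, rfl⟩, ?_⟩
  calc (μ.bind k).tvDist (ν.bind k) ≤ μ.tvDist ν := tvDist_bind_le μ ν k
    _ ≤ ε := h
    _ ≤ ε / γ := le_div_self ((tvDist_nonneg μ ν).trans h) hγ0 hγ1

theorem ApproxBisimilar.of_mem_closure (hM : M.InputEnabled) (hγ0 : 0 < γ) (hγ1 : γ ≤ 1)
    {δ η : ℝ} {μ ν : ProbDist S} (h : ν ∈ closure {ρ | ApproxBisimilar M γ δ μ ρ})
    (hη : 0 < η) : ApproxBisimilar M γ (δ + η) μ ν := by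
  obtain ⟨ρ, hρν, hμρ⟩ := mem_closure_iff.1 h {ρ | ρ.tvDist ν < η}
    (isOpen_lt (continuous_tvDist_left ν) continuous_const) (by simpa [tvDist_self] using hη)
  exact hμρ.trans (approxBisimilar_of_tvDist_le hM hγ0 hγ1 hρν.le)

theorem exists_lifted_forall_approxBisimilar (hM : M.InputEnabled) (hγ0 : 0 < γ)
    (hγ1 : γ ≤ 1) {μ ν μ' : ProbDist S} {a : Act} (h : ∀ ε > 0, ApproxBisimilar M γ ε μ ν)
    (hμ' : Lifted M μ a μ') : ∃ ν', Lifted M ν a ν' ∧ ∀ δ > 0, ApproxBisimilar M γ δ μ' ν' := by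
  have : T2Space (ProbDist S) := isEmbedding_f.t2Space
  let G (n : ℕ) : Set (ProbDist S) :=
    {ρ | Lifted M ν a ρ ∧ ApproxBisimilar M γ (1 / (n + 1)) μ' ρ}
  have hG_nonempty (n : ℕ) : (G n).Nonempty := by
    obtain ⟨ρ, hρ, hμ'ρ⟩ := (h (γ * (1 / (n + 1))) (by positivity)).exists_lifted hμ'
    rw [mul_div_cancel_left₀ _ hγ0.ne'] at hμ'ρ
    exact ⟨ρ, hρ, hμ'ρ⟩
  have hG_succ (n : ℕ) : G (n + 1) ⊆ G n := fun ρ ⟨hρ, hμ'ρ⟩ =>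
    ⟨hρ, hμ'ρ.mono hγ0.le (by gcongr; linarith)⟩
  have hK := isCompact_setOf_lifted hM ν a
  have hGK (n : ℕ) : G n ⊆ {ν' | Lifted M ν a ν'} := fun ρ hρ => hρ.1
  obtain ⟨ν', hν'⟩ := IsCompact.nonempty_iInter_of_sequence_nonempty_isCompact_isClosed
    (fun n => closure (G n)) (fun n => closure_mono (hG_succ n)) (fun n => (hG_nonempty n).closure)
    (hK.closure_of_subset (hGK 0)) (fun _ => isClosed_closure)
  rw [Set.mem_iInter] at hν'
  refine ⟨ν', hK.isClosed.closure_subset_iff.2 (hGK 0) (hν' 0), fun δ hδ => ?_⟩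
  obtain ⟨n, hn⟩ := exists_nat_one_div_lt hδ
  have := ApproxBisimilar.of_mem_closure hM hγ0 hγ1
    (closure_mono (fun ρ hρ => hρ.2) (hν' n)) (sub_pos.2 hn)
  rwa [add_sub_cancel] at this

theorem isBisim_forall_approxBisimilar (hM : M.InputEnabled) (hγ0 : 0 < γ) (hγ1 : γ ≤ 1) :
    IsBisim M fun μ ν => ∀ ε > 0, ApproxBisimilar M γ ε μ ν := by
  refine ⟨fun μ ν h ε hε => (h ε hε).symm, fun μ ν h => ⟨?_, fun a μ' hμ' =>
    exists_lifted_forall_approxBisimilar hM hγ0 hγ1 h hμ'⟩⟩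
  refine (dAP_nonpos_iff M.L μ ν).1 (le_of_forall_pos_le_add fun ε hε => ?_)
  simpa using (h ε hε).dAP_le

theorem Bisimilar.approxBisimilar_zero {μ ν : ProbDist S} (h : Bisimilar M μ ν) :
    ApproxBisimilar M γ 0 μ ν := by
  obtain ⟨R, ⟨hR_symm, hR⟩, hμν⟩ := h
  refine ⟨fun ε x y => ε = 0 ∧ R x y, ⟨fun ε x y hxy => ⟨hxy.1, hR_symm hxy.2⟩, ?_⟩, rfl, hμν⟩
  rintro ε x y ⟨rfl, hxy⟩
  obtain ⟨hprob, hstep⟩ := hR x y hxy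
  refine ⟨(dAP_nonpos_iff M.L x y).2 hprob, fun a x' hx' => ?_⟩
  obtain ⟨y', hy', hR'⟩ := hstep a x' hx'
  exact ⟨y', hy', zero_div γ, hR'⟩

theorem Db_eq_zero_of_approxBisimilar_zero {μ ν : ProbDist S}
    (h : ApproxBisimilar M γ 0 μ ν) : Db M γ μ ν = 0 := by
  have hbdd : BddBelow {ε | 0 ≤ ε ∧ ApproxBisimilar M γ ε μ ν} := ⟨0, fun _ hε => hε.1⟩
  exact le_antisymm (csInf_le hbdd ⟨le_rfl, h⟩) (le_csInf ⟨0, le_rfl, h⟩ fun _ hε => hε.1)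

theorem approxBisimilar_of_Db_eq_zero (hM : M.InputEnabled) (hγ0 : 0 < γ) (hγ1 : γ ≤ 1)
    {μ ν : ProbDist S} (hDb : Db M γ μ ν = 0) {ε : ℝ} (hε : 0 < ε) :
    ApproxBisimilar M γ ε μ ν := by
  have hne : {ε | 0 ≤ ε ∧ ApproxBisimilar M γ ε μ ν}.Nonempty :=
    ⟨μ.tvDist ν, tvDist_nonneg μ ν, approxBisimilar_of_tvDist_le hM hγ0 hγ1 le_rfl⟩
  obtain ⟨ε', ⟨-, hε'⟩, hε'ε⟩ := exists_lt_of_csInf_lt hne (hDb.symm ▸ hε : Db M γ μ ν < ε)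
  exact hε'.mono hγ0.le hε'ε.le

end Approximate

theorem stmt12 {S Act AP : Type} [Fintype S] [Fintype AP] [DecidableEq AP]
    (M : PA S Act AP) (hM : M.InputEnabled) (γ : ℝ) (hγ0 : 0 < γ) (hγ1 : γ ≤ 1)
    (μ ν : ProbDist S) :
    Bisimilar M μ ν ↔ Db M γ μ ν = 0 :=
  ⟨fun h => Db_eq_zero_of_approxBisimilar_zero h.approxBisimilar_zero,
    fun hDb => ⟨_, isBisim_forall_approxBisimilar hM hγ0 hγ1,
      fun _ hε => approxBisimilar_of_Db_eq_zero hM hγ0 hγ1 hDb hε⟩⟩
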